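/- For all a, b ∈ ℤ with a·b ≤ 0, the identity p_a(X − (a+b)) · p_b(X − (a+b)) = p_a(X − a) · p_b(X − b) holds in ℤ[X]. (This is the per-edge identity from which the TGW consistency equations for the datum attached to a multiquiver follow, since σ_i(u_{ei})·σ_j(u_{ej}) = σ_iσ_j(u_{ei}·u_{ej}) reduces to it with a = γ e i, b = γ e j.) -/
import Mathlib

open Polynomial

noncomputable def pc (c : ℤ) : Polynomial ℤ :=
  if 0 < c then ∏ k ∈ Finset.range c.toNat, (X + C (k : ℤ))
  else ∏ m ∈ Finset.range (-c).toNat, (X - C ((m : ℤ) + 1))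

lemma reflect_prod (n : ℕ) (s : ℤ) :
    ∏ k ∈ Finset.range n, (X - C (s - (k : ℤ))) =
      ∏ j ∈ Finset.range n, (X - C (s - n + 1 + (j : ℤ))) := by
  rw [← Finset.prod_range_reflect (fun j => X - C (s - n + 1 + (j : ℤ))) n]
  refine Finset.prod_congr rfl fun k hk => ?_
  rw [Finset.mem_range] at hk
  congr 1
  have : ((n - 1 - k : ℕ) : ℤ) = n - 1 - k := by omega
  rw [this]; ring

lemma key (a b : ℤ) (ha : 0 < a) (hb : b < 0) :
    (pc a).comp (X - C (a + b)) * (pc b).comp (X - C (a + b)) =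
      (pc a).comp (X - C a) * (pc b).comp (X - C b) := by
  obtain ⟨A, rfl⟩ : ∃ A : ℕ, a = A := ⟨a.toNat, (Int.toNat_of_nonneg ha.le).symm⟩
  obtain ⟨N, rfl⟩ : ∃ N : ℕ, b = -N := ⟨(-b).toNat, by omega⟩
  set f : ℕ → Polynomial ℤ := fun j => X - C ((j : ℤ) + 1 - N) with hf
  have hc1 : ∀ s : ℤ, (pc A).comp (X - C s) = ∏ k ∈ Finset.range A, (X - C (s - k)) := by
    intro s
    rw [pc, if_pos (by exact_mod_cast ha), Int.toNat_natCast, prod_comp]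
    refine Finset.prod_congr rfl fun k _ => ?_
    simp [C_sub]; ring
  have hc2 : ∀ s : ℤ, (pc (-N)).comp (X - C s) = ∏ m ∈ Finset.range N, (X - C (s + m + 1)) := by
    intro s
    rw [pc, if_neg (by omega), neg_neg, Int.toNat_natCast, prod_comp]
    refine Finset.prod_congr rfl fun m _ => ?_
    simp [C_add, C_sub]; ring
  rw [hc1, hc1, hc2, hc2, reflect_prod, reflect_prod]
  have lhs : (∏ j ∈ Finset.range A, (X - C ((A : ℤ) + -N - A + 1 + j))) *
      ∏ m ∈ Finset.range N, (X - C ((A : ℤ) + -N + m + 1)) =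
      ∏ j ∈ Finset.range (A + N), f j := by
    rw [Finset.prod_range_add f A N]
    congr 1
    · exact Finset.prod_congr rfl fun j _ => by rw [hf]; congr 1; push_cast; ring
    · exact Finset.prod_congr rfl fun m _ => by rw [hf]; congr 1; push_cast; ring
  have rhs : (∏ j ∈ Finset.range A, (X - C ((A : ℤ) - A + 1 + j))) *
      ∏ m ∈ Finset.range N, (X - C ((-N : ℤ) + m + 1)) =
      ∏ j ∈ Finset.range (N + A), f j := by
    rw [Finset.prod_range_add f N A, mul_comm]
    congr 1
    · exact Finset.prod_congr rfl fun j _ => by rw [hf]; congr 1; push_cast; ring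
    · exact Finset.prod_congr rfl fun m _ => by rw [hf]; congr 1; push_cast; ring
  rw [lhs, rhs, Nat.add_comm]

theorem pc_shift_identity (a b : ℤ) (hab : a * b ≤ 0) :
    (pc a).comp (X - C (a + b)) * (pc b).comp (X - C (a + b)) =
      (pc a).comp (X - C a) * (pc b).comp (X - C b) := by
  have h0 : pc 0 = 1 := by simp [pc]
  rcases lt_trichotomy a 0 with ha | rfl | ha
  · rcases lt_trichotomy b 0 with hb | rfl | hb
    · nlinarith
    · simp [h0]
    · have := key b a hb ha
      rw [add_comm a b]
      rw [mul_comm ((pc a).comp _), mul_comm ((pc a).comp _)]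
      exact this
  · simp [h0]
  · have hb : b < 0 ∨ b = 0 := by
      rcases lt_trichotomy b 0 with h | h | h
      · exact Or.inl h
      · exact Or.inr h
      · nlinarith
    rcases hb with hb | rfl
    · exact key a b ha hb
    · simp [h0]
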